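/- arXiv:2308.07455 — 2 statements merged into one kernel-verified Lean document; each statement's English description precedes it below -/
import Mathlib

section
/- For every integer $n \ge 4$, the number of magic quad squares using cards from the EvenQuads-$2^n$ deck equals $2^n(2^n-1)(2^n-2)(2^n-4)(2^n-8)$ times the number of magic quad squares of type C over the same deck. -/
/-- A card in the EvenQuads-`2^n` deck, modeled as a vector in `(ℤ/2)^n`. -/
abbrev Deck (n : ℕ) := Fin n → ZMod 2

/-- Identification of the integer `k` (via binary representation) with a card. -/
def numToCard (n k : ℕ) : Deck n := fun i => if Nat.testBit k i.val then 1 else 0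

/-- A quad square is semimagic if every row and every column sums to zero. -/
def IsSemimagic {n : ℕ} (M : Fin 4 × Fin 4 → Deck n) : Prop :=
  (∀ i : Fin 4, ∑ j : Fin 4, M (i, j) = 0) ∧ (∀ j : Fin 4, ∑ i : Fin 4, M (i, j) = 0)

/-- A quad square is magic if it is semimagic and both diagonals sum to zero. -/
def IsMagic {n : ℕ} (M : Fin 4 × Fin 4 → Deck n) : Prop :=
  IsSemimagic M ∧ (∑ i : Fin 4, M (i, i) = 0) ∧ (∑ i : Fin 4, M (i, 3 - i) = 0)

/-- Identification of `Fin 4` with `(ℤ/2)^2` via binary representation. -/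
def finToVec (a : Fin 4) : Fin 2 → ZMod 2 := fun i => if Nat.testBit a.val i.val then 1 else 0

/-- A grid position as an element of `(ℤ/2)^2 × (ℤ/2)^2 ≅ (ℤ/2)^4`. -/
def posVec (p : Fin 4 × Fin 4) : (Fin 2 → ZMod 2) × (Fin 2 → ZMod 2) :=
  (finToVec p.1, finToVec p.2)

/-- A quad square is strongly magic if any four pairwise distinct positions summing to
zero in `(ℤ/2)^4` carry cards summing to zero. -/
def IsStronglyMagic {n : ℕ} (M : Fin 4 × Fin 4 → Deck n) : Prop :=
  ∀ p1 p2 p3 p4 : Fin 4 × Fin 4,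
    p1 ≠ p2 → p1 ≠ p3 → p1 ≠ p4 → p2 ≠ p3 → p2 ≠ p4 → p3 ≠ p4 →
    posVec p1 + posVec p2 + posVec p3 + posVec p4 = 0 →
    M p1 + M p2 + M p3 + M p4 = 0

/-- A quad square is of type C if its first row is `0,1,2,3` and
its first column is `0,4,8,12`. -/
def IsTypeC {n : ℕ} (M : Fin 4 × Fin 4 → Deck n) : Prop :=
  (∀ j : Fin 4, M (0, j) = numToCard n j.val) ∧
  (∀ i : Fin 4, M (i, 0) = numToCard n (4 * i.val))

/-!
Each injective magic square `M` is carried to a square of type C by the affine map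
`x ↦ g⁻¹ (x - M (0,0))`, where `g` is a linear automorphism sending the cards `1, 2, 4, 8` to
the frame `M (0,1) - M (0,0), M (0,2) - M (0,0), M (1,0) - M (0,0), M (2,0) - M (0,0)`. Such a `g`
exists because the frame is linearly independent: over `ZMod 2`, a combination of the first two
frame vectors is `M (0,j) - M (0,0)` (the first row is a quad), one of the last two is
`M (i,0) - M (0,0)`, and a vanishing sum forces `M (0,j) = M (i,0)`, i.e. `i = j = 0` by
injectivity. Affine automorphisms preserve quads, so the magic squares are in bijection with
triples (corner, independent frame, type-C square), of which there are
`2^n · (2^n - 1)(2^n - 2)(2^n - 4)(2^n - 8) · #typeC`.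
-/

theorem Nat.card_eq_card_mul_card_of_fiber_equiv {α β γ : Type*} (f : α → β)
    (h : ∀ b, Nonempty ({a // f a = b} ≃ γ)) : Nat.card α = Nat.card β * Nat.card γ := by
  rw [← Nat.card_prod]
  exact Nat.card_congr <| (Equiv.sigmaFiberEquiv f).symm.trans <|
    (Equiv.sigmaCongrRight fun b => (h b).some).trans (Equiv.sigmaEquivProd β γ)

theorem LinearIndependent.exists_linearEquiv_apply_eq {K V ι : Type*} [DivisionRing K]
    [AddCommGroup V] [Module K V] [Finite ι] {v w : ι → V} (hv : LinearIndependent K v)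
    (hw : LinearIndependent K w) : ∃ g : V ≃ₗ[K] V, ∀ i, g (v i) = w i := by
  have := FiniteDimensional.span_of_finite K (Set.finite_range v)
  obtain ⟨g, hg⟩ := Submodule.exists_linearEquiv_restrict_eq
    ((Module.Basis.span hv).equiv (Module.Basis.span hw) (Equiv.refl ι))
  refine ⟨g, fun i => ?_⟩
  have hgi := hg (Module.Basis.span hv i)
  rwa [Module.Basis.equiv_apply, Equiv.refl_apply, Module.Basis.span_apply,
    Module.Basis.span_apply, eq_comm] at hgi

section Cards

variable {n : ℕ}

theorem numToCard_zero : numToCard n 0 = 0 := by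
  funext i
  simp [numToCard]

theorem numToCard_xor (a b : ℕ) : numToCard n (a ^^^ b) = numToCard n a + numToCard n b := by
  funext i
  simp only [numToCard, Nat.testBit_xor, Pi.add_apply]
  cases a.testBit i <;> cases b.testBit i <;> decide

theorem numToCard_two_pow {i : ℕ} (hi : i < n) :
    numToCard n (2 ^ i) = Pi.single ⟨i, hi⟩ 1 := by
  funext j
  simp [numToCard, Nat.testBit_two_pow, Pi.single_apply, Fin.ext_iff, eq_comm]

def stdFrame (n : ℕ) : Fin 4 → Deck n := fun i => numToCard n (2 ^ (i : ℕ))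

theorem linearIndependent_stdFrame (hn : 4 ≤ n) : LinearIndependent (ZMod 2) (stdFrame n) := by
  have : stdFrame n = Pi.basisFun (ZMod 2) (Fin n) ∘ Fin.castLE hn := by
    funext i
    simp [stdFrame, numToCard_two_pow (i.2.trans_le hn)]
    rfl
  rw [this]
  exact (Pi.basisFun (ZMod 2) (Fin n)).linearIndependent.comp _ (Fin.castLE_injective hn)

theorem card_linearIndependent_deck (hn : 4 ≤ n) :
    (Nat.card {e : Fin 4 → Deck n // LinearIndependent (ZMod 2) e} : ℤ) =
      (2 ^ n - 1) * (2 ^ n - 2) * (2 ^ n - 4) * (2 ^ n - 8) := by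
  have hdim : Module.finrank (ZMod 2) (Deck n) = n := by simp
  rw [card_linearIndependent (hdim.symm ▸ hn), hdim, ZMod.card, Nat.cast_prod]
  have hcast (i : Fin 4) : ((2 ^ n - 2 ^ (i : ℕ) : ℕ) : ℤ) = 2 ^ n - 2 ^ (i : ℕ) := by
    push_cast [Nat.cast_sub (Nat.pow_le_pow_right two_pos (by omega : (i : ℕ) ≤ n))]
    rfl
  simp only [hcast, Fin.prod_univ_four]
  norm_num

end Cards

theorem exists_smul_add_smul_eq_sub {G : Type*} [AddCommGroup G] [Module (ZMod 2) G]
    (a : Fin 4 → G) (ha : ∑ i, a i = 0) (c₀ c₁ : ZMod 2) :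
    ∃ j, c₀ • (a 1 - a 0) + c₁ • (a 2 - a 0) = a j - a 0 ∧ (j = 0 → c₀ = 0 ∧ c₁ = 0) := by
  rw [Fin.sum_univ_four] at ha
  have h01 : ∀ c : ZMod 2, c = 0 ∨ c = 1 := by decide
  rcases h01 c₀ with rfl | rfl <;> rcases h01 c₁ with rfl | rfl
  · exact ⟨0, by simp, fun _ => ⟨rfl, rfl⟩⟩
  · exact ⟨2, by simp, by decide⟩
  · exact ⟨1, by simp, by decide⟩
  · refine ⟨3, ?_, by decide⟩
    linear_combination (norm := module) ha - ZModModule.add_self (a 0 + a 3)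

section Squares

variable {n : ℕ}

def frame {G : Type*} [AddCommGroup G] (M : Fin 4 × Fin 4 → G) : Fin 4 → G :=
  ![M (0, 1) - M (0, 0), M (0, 2) - M (0, 0), M (1, 0) - M (0, 0), M (2, 0) - M (0, 0)]

theorem frame_map_add {G H F : Type*} [AddCommGroup G] [AddCommGroup H] [FunLike F G H]
    [AddMonoidHomClass F G H] (g : F) (t : H) (M : Fin 4 × Fin 4 → G) :
    frame (fun p => g (M p) + t) = g ∘ frame M := by
  funext i
  fin_cases i <;> simp [frame, map_sub]

theorem linearIndependent_frame {M : Fin 4 × Fin 4 → Deck n} (hinj : Function.Injective M)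
    (hM : IsSemimagic M) : LinearIndependent (ZMod 2) (frame M) := by
  rw [Fintype.linearIndependent_iff]
  intro c hc
  obtain ⟨j, hj, hj0⟩ := exists_smul_add_smul_eq_sub (fun j => M (0, j)) (hM.1 0) (c 0) (c 1)
  obtain ⟨i, hi, hi0⟩ := exists_smul_add_smul_eq_sub (fun i => M (i, 0)) (hM.2 0) (c 2) (c 3)
  have hsum : (M (0, j) - M (0, 0)) + (M (i, 0) - M (0, 0)) = 0 := by
    rw [← hj, ← hi, ← hc, Fin.sum_univ_four]
    simp only [frame, Matrix.cons_val]
    abel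
  have hji : ((0 : Fin 4), j) = (i, 0) := hinj <| by
    linear_combination (norm := module) hsum + ZModModule.add_self (M (0, 0)) -
      ZModModule.add_self (M (i, 0))
  obtain ⟨rfl, rfl⟩ : i = 0 ∧ j = 0 := by simpa [eq_comm] using hji
  intro k
  fin_cases k
  exacts [(hj0 rfl).1, (hj0 rfl).2, (hi0 rfl).1, (hi0 rfl).2]

theorem isTypeC_iff_of_isSemimagic {M : Fin 4 × Fin 4 → Deck n} (hM : IsSemimagic M) :
    IsTypeC M ↔ M (0, 0) = 0 ∧ frame M = stdFrame n := by
  have hrow := hM.1 0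
  have hcol := hM.2 0
  simp only [Fin.sum_univ_four] at hrow hcol
  constructor
  · rintro ⟨hr, hc⟩
    have h0 : M (0, 0) = 0 := by simpa [numToCard_zero] using hr 0
    refine ⟨h0, funext fun i => ?_⟩
    fin_cases i <;> simp [frame, stdFrame, h0, hr, hc]
  · rintro ⟨h0, hframe⟩
    have h1 : M (0, 1) = numToCard n 1 := by simpa [frame, stdFrame, h0] using congrFun hframe 0
    have h2 : M (0, 2) = numToCard n 2 := by simpa [frame, stdFrame, h0] using congrFun hframe 1
    have h4 : M (1, 0) = numToCard n 4 := by simpa [frame, stdFrame, h0] using congrFun hframe 2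
    have h8 : M (2, 0) = numToCard n 8 := by simpa [frame, stdFrame, h0] using congrFun hframe 3
    refine ⟨fun j => ?_, fun i => ?_⟩
    · fin_cases j
      · simp [h0, numToCard_zero]
      · exact h1
      · exact h2
      · change M (0, 3) = numToCard n (1 ^^^ 2)
        rw [numToCard_xor, ← h1, ← h2]
        linear_combination (norm := module) hrow - h0 - ZModModule.add_self (M (0, 1) + M (0, 2))
    · fin_cases i
      · simp [h0, numToCard_zero]
      · exact h4
      · exact h8
      · change M (3, 0) = numToCard n (4 ^^^ 8)
        rw [numToCard_xor, ← h4, ← h8]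
        linear_combination (norm := module) hcol - h0 - ZModModule.add_self (M (1, 0) + M (2, 0))

theorem isMagic_map_add_iff (g : Deck n ≃ₗ[ZMod 2] Deck n) (t : Deck n)
    (M : Fin 4 × Fin 4 → Deck n) : IsMagic (fun p => g (M p) + t) ↔ IsMagic M := by
  have hquad : ∀ a b c d : Deck n,
      g a + t + (g b + t) + (g c + t) + (g d + t) = 0 ↔ a + b + c + d = 0 := by
    intro a b c d
    have : g a + t + (g b + t) + (g c + t) + (g d + t) = g (a + b + c + d) := by
      rw [map_add, map_add, map_add]
      linear_combination (norm := module) ZModModule.add_self (t + t)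
    rw [this, g.map_eq_zero_iff]
  simp only [IsMagic, IsSemimagic, Fin.sum_univ_four, hquad]

theorem nonempty_fiber_equiv_typeC (hn : 4 ≤ n) (t : Deck n) {e : Fin 4 → Deck n}
    (he : LinearIndependent (ZMod 2) e) :
    Nonempty ({M : Fin 4 × Fin 4 → Deck n //
        (Function.Injective M ∧ IsMagic M) ∧ M (0, 0) = t ∧ frame M = e} ≃
      {M : Fin 4 × Fin 4 → Deck n // Function.Injective M ∧ IsMagic M ∧ IsTypeC M}) := by
  obtain ⟨g, hg⟩ := (linearIndependent_stdFrame hn).exists_linearEquiv_apply_eq he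
  let A : Deck n ≃ Deck n := g.toEquiv.trans (Equiv.addRight t)
  refine ⟨(Equiv.subtypeEquiv (Equiv.piCongrRight fun _ => A) fun N => ?_).symm⟩
  change _ ↔ (Function.Injective (A ∘ N) ∧ IsMagic (fun p => g (N p) + t)) ∧
    g (N (0, 0)) + t = t ∧ frame (fun p => g (N p) + t) = e
  have he' : e = g ∘ stdFrame n := funext fun i => (hg i).symm
  rw [A.injective.of_comp_iff, isMagic_map_add_iff, add_eq_right, g.map_eq_zero_iff,
    frame_map_add g, he', g.injective.comp_left.eq_iff]
  exact ⟨fun ⟨hinj, hM, hC⟩ => ⟨⟨hinj, hM⟩, (isTypeC_iff_of_isSemimagic hM.1).1 hC⟩,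
    fun ⟨⟨hinj, hM⟩, h⟩ => ⟨hinj, hM, (isTypeC_iff_of_isSemimagic hM.1).2 h⟩⟩

end Squares

theorem magic_count_eq_factor_mul_typeC (n : ℕ) (hn : 4 ≤ n) :
    (Nat.card {M : Fin 4 × Fin 4 → Deck n // Function.Injective M ∧ IsMagic M} : ℤ) =
      2 ^ n * (2 ^ n - 1) * (2 ^ n - 2) * (2 ^ n - 4) * (2 ^ n - 8) *
        (Nat.card {M : Fin 4 × Fin 4 → Deck n //
          Function.Injective M ∧ IsMagic M ∧ IsTypeC M} : ℤ) := by
  let θ : {M : Fin 4 × Fin 4 → Deck n // Function.Injective M ∧ IsMagic M} →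
      Deck n × {e : Fin 4 → Deck n // LinearIndependent (ZMod 2) e} :=
    fun M => (M.1 (0, 0), ⟨frame M.1, linearIndependent_frame M.2.1 M.2.2.1⟩)
  have hfiber : ∀ b, Nonempty ({M // θ M = b} ≃
      {M : Fin 4 × Fin 4 → Deck n // Function.Injective M ∧ IsMagic M ∧ IsTypeC M}) := by
    rintro ⟨t, e, he⟩
    obtain ⟨E⟩ := nonempty_fiber_equiv_typeC hn t he
    refine ⟨((Equiv.subtypeEquivRight fun M => ?_).trans
      (Equiv.subtypeSubtypeEquivSubtypeInter _ _)).trans E⟩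
    simp [θ, Prod.ext_iff, Subtype.ext_iff]
  rw [Nat.card_eq_card_mul_card_of_fiber_equiv θ hfiber, Nat.card_prod, Nat.cast_mul,
    Nat.cast_mul, card_linearIndependent_deck hn]
  have hdeck : Nat.card (Deck n) = 2 ^ n := by simp
  push_cast [hdeck]
  ring
end

section
/- There are exactly 10 magic quad squares of type C over the EvenQuads-16 deck (the case $n = 4$). -/
/-! ### Auxiliary machinery -/

def eF (k : Fin 16) : Deck 4 := numToCard 4 k.val

lemma eF_inj : Function.Injective eF := by decide

def xor16 (x y : Fin 16) : Fin 16 := ⟨x.val ^^^ y.val, Nat.xor_lt_two_pow (n := 4) x.2 y.2⟩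

lemma eF_hom : ∀ x y : Fin 16, eF (xor16 x y) = eF x + eF y := by decide

noncomputable def eE : Fin 16 ≃ Deck 4 :=
  Equiv.ofBijective eF ((Fintype.bijective_iff_injective_and_card eF).2 ⟨eF_inj, by decide⟩)

lemma eE_apply (k : Fin 16) : eE k = eF k := rfl

def build (a b d : Deck 4) (p : Fin 4 × Fin 4) : Deck 4 :=
  let c := numToCard 4 15 + b
  ![ ![numToCard 4 0, numToCard 4 1, numToCard 4 2, numToCard 4 3],
     ![numToCard 4 4, a, b, numToCard 4 4 + a + b],
     ![numToCard 4 8, c, d, numToCard 4 8 + c + d],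
     ![numToCard 4 12, numToCard 4 1 + a + c, numToCard 4 2 + b + d, a + d] ] p.1 p.2

lemma h2 (x : Deck 4) : x + x = 0 := by
  funext i; exact CharTwo.add_self_eq_zero (x i)

lemma hm2 (x : Deck 4) : 2 * x = 0 := by rw [two_mul, h2]

set_option linter.unnecessarySeqFocus false in
lemma magic_build (a b d : Deck 4) : IsMagic (build a b d) ∧ IsTypeC (build a b d) := by
  refine ⟨⟨⟨fun i => ?_, fun j => ?_⟩, ?_, ?_⟩, fun j => ?_, fun i => ?_⟩
  · fin_cases i <;> simp [Fin.sum_univ_four, build] <;>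
      first | decide | (abel_nf; simp [hm2]; try decide)
  · fin_cases j <;> simp [Fin.sum_univ_four, build] <;>
      first | decide | (abel_nf; simp [hm2]; try decide)
  · simp [Fin.sum_univ_four, build] <;>
      first | decide | (abel_nf; simp [hm2]; try decide)
  · simp [Fin.sum_univ_four, build] <;>
      first | decide | (abel_nf; simp [hm2]; try decide)
  · fin_cases j <;> rfl
  · fin_cases i <;> rfl

lemma quadW {x y z w : Deck 4} (h : x + y + z + w = 0) : w = x + y + z := by
  calc w = x + y + z + w + w := by rw [h, zero_add]
  _ = x + y + z + (w + w) := by rw [add_assoc]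
  _ = x + y + z := by rw [h2, add_zero]

lemma quadZ {x y z w : Deck 4} (h : x + y + z + w = 0) : z = x + y + w :=
  quadW (by rw [← h]; abel)

lemma recon {M : Fin 4 × Fin 4 → Deck 4} (hM : Function.Injective M ∧ IsMagic M ∧ IsTypeC M) :
    M = build (M (1,1)) (M (1,2)) (M (2,2)) := by
  obtain ⟨-, ⟨⟨hr, hc⟩, hd1, hd2⟩, hC1, hC2⟩ := hM
  have hr1 := hr 1; have hr2 := hr 2
  have hc1 := hc 1; have hc2 := hc 2
  simp only [Fin.sum_univ_four] at hr1 hr2 hc1 hc2 hd1 hd2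
  rw [show (3:Fin 4) - 0 = 3 from rfl, show (3:Fin 4) - 1 = 2 from rfl,
      show (3:Fin 4) - 2 = 1 from rfl, show (3:Fin 4) - 3 = 0 from rfl] at hd2
  have h00 : M (0,0) = numToCard 4 0 := hC1 0
  have h01 : M (0,1) = numToCard 4 1 := hC1 1
  have h02 : M (0,2) = numToCard 4 2 := hC1 2
  have h03 : M (0,3) = numToCard 4 3 := hC1 3
  have h10 : M (1,0) = numToCard 4 4 := hC2 1
  have h20 : M (2,0) = numToCard 4 8 := hC2 2
  have h30 : M (3,0) = numToCard 4 12 := hC2 3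
  have e21 : M (2,1) = numToCard 4 15 + M (1,2) := by
    have h := quadZ hd2
    rw [h03, h30, add_right_comm,
      show numToCard 4 3 + numToCard 4 12 = numToCard 4 15 from by decide] at h
    exact h
  have e13 : M (1,3) = numToCard 4 4 + M (1,1) + M (1,2) := by
    have h := quadW hr1; rw [h10] at h; exact h
  have e23 : M (2,3) = numToCard 4 8 + (numToCard 4 15 + M (1,2)) + M (2,2) := by
    have h := quadW hr2; rw [h20, e21] at h; exact h
  have e31 : M (3,1) = numToCard 4 1 + M (1,1) + (numToCard 4 15 + M (1,2)) := by
    have h := quadW hc1; rw [h01, e21] at h; exact h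
  have e32 : M (3,2) = numToCard 4 2 + M (1,2) + M (2,2) := by
    have h := quadW hc2; rw [h02] at h; exact h
  have e33 : M (3,3) = M (1,1) + M (2,2) := by
    have h := quadW hd1
    rw [h00, show numToCard 4 0 = 0 from by decide, zero_add] at h
    exact h
  funext p
  fin_cases p <;>
    first
      | rfl
      | exact h00 | exact h01 | exact h02 | exact h03
      | exact h10 | exact h20 | exact h30
      | exact e13 | exact e21 | exact e23 | exact e31 | exact e32 | exact e33

def posList : List (Fin 4 × Fin 4) :=
  [(0,0),(0,1),(0,2),(0,3),(1,0),(1,1),(1,2),(1,3),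
   (2,0),(2,1),(2,2),(2,3),(3,0),(3,1),(3,2),(3,3)]

def cellF (t : Fin 16 × Fin 16 × Fin 16) (p : Fin 4 × Fin 4) : Fin 16 :=
  let a := t.1; let b := t.2.1; let d := t.2.2
  let c := xor16 15 b
  ![ ![0, 1, 2, 3],
     ![4, a, b, xor16 (xor16 4 a) b],
     ![8, c, d, xor16 (xor16 8 c) d],
     ![12, xor16 (xor16 1 a) c, xor16 (xor16 2 b) d, xor16 a d] ] p.1 p.2

def cells (t : Fin 16 × Fin 16 × Fin 16) : List (Fin 16) :=
  let a := t.1; let b := t.2.1; let d := t.2.2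
  let c := xor16 15 b
  [0, 1, 2, 3, 4, a, b, xor16 (xor16 4 a) b, 8, c, d, xor16 (xor16 8 c) d,
   12, xor16 (xor16 1 a) c, xor16 (xor16 2 b) d, xor16 a d]

lemma cells_eq (t : Fin 16 × Fin 16 × Fin 16) : cells t = posList.map (cellF t) := rfl

lemma build_eF (t : Fin 16 × Fin 16 × Fin 16) :
    build (eF t.1) (eF t.2.1) (eF t.2.2) = fun p => eF (cellF t p) := by
  funext p
  fin_cases p <;> simp [build, cellF, eF_hom] <;> try rfl

lemma inj_iff (t : Fin 16 × Fin 16 × Fin 16) :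
    Function.Injective (build (eF t.1) (eF t.2.1) (eF t.2.2)) ↔ (cells t).Nodup := by
  rw [build_eF]
  have hinj : Function.Injective (fun p => eF (cellF t p)) ↔ Function.Injective (cellF t) := by
    constructor
    · intro h x y hxy; exact h (by simp only [hxy])
    · intro h; exact fun x y hxy => h (eF_inj hxy)
  rw [hinj, cells_eq]
  have hnd : posList.Nodup := by decide
  rw [List.nodup_map_iff_inj_on hnd]
  have hmem : ∀ p : Fin 4 × Fin 4, p ∈ posList := by decide
  constructor
  · intro h x _ y _ hxy; exact h hxy
  · intro h x y hxy
    exact h x (hmem x) y (hmem y) hxy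

lemma eF_symm (x : Deck 4) : eF (eE.symm x) = x := eE.apply_symm_apply x

noncomputable def mainEquiv :
    {M : Fin 4 × Fin 4 → Deck 4 // Function.Injective M ∧ IsMagic M ∧ IsTypeC M} ≃
    {t : Fin 16 × Fin 16 × Fin 16 // (cells t).Nodup} where
  toFun M := ⟨(eE.symm (M.1 (1,1)), eE.symm (M.1 (1,2)), eE.symm (M.1 (2,2))), by
    rw [← inj_iff]
    simp only [eF_symm]
    rw [← recon M.2]
    exact M.2.1⟩
  invFun t := ⟨build (eF t.1.1) (eF t.1.2.1) (eF t.1.2.2),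
    (inj_iff t.1).2 t.2, (magic_build _ _ _).1, (magic_build _ _ _).2⟩
  left_inv M := by
    apply Subtype.ext
    simp only [eF_symm]
    exact (recon M.2).symm
  right_inv t := by
    apply Subtype.ext
    show (eE.symm (eF t.1.1), eE.symm (eF t.1.2.1), eE.symm (eF t.1.2.2)) = t.1
    simp only [← eE_apply, Equiv.symm_apply_apply]

set_option maxRecDepth 4000000 in
set_option maxHeartbeats 40000000 in
lemma count_cells : Fintype.card {t : Fin 16 × Fin 16 × Fin 16 // (cells t).Nodup} = 10 := by
  decide

theorem magic_typeC_count_deck16 :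
    Nat.card {M : Fin 4 × Fin 4 → Deck 4 //
      Function.Injective M ∧ IsMagic M ∧ IsTypeC M} = 10 := by
  rw [Nat.card_congr mainEquiv, Nat.card_eq_fintype_card]
  exact count_cells
end
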